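/- Let η > 0, κ ∈ ℝ^{n×n} with κ_ij > 0, r, c ∈ Δ^n, and let x̃ = (α̃, β̃, Ũ) with Ũ ∈ ℝ^{d×k}, Ũ^TŨ = I_k, such that ‖ζ_η(x̃,κ)‖₁ = 1. Then for every ε_2 ≥ 0 and every π̂ ∈ Π(r,c) with ‖π̂ − π_η(x̃,κ)‖₁ ≤ ε_2, it holds that ⟨π̂, Z(x̃)⟩ ≤ (2 log n + ‖log κ‖_var) η + (‖α̃‖_var + ‖β̃‖_var + ‖C‖_∞) ε_2. -/

import Mathlib

/-!
The Gibbs plan `w = ζ_η(x̃, κ)` has unit mass, so `φ = η log κ - η log w` entrywise. Hence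
`⟨w, φ⟩ = η ⟨w, log κ⟩ + η H(w) ≤ η max log κ + η log n²` (Jensen for `log`), while `w ≤ 1`
gives `min φ ≥ η min log κ`; together they bound `⟨w, Z⟩`. Replacing `w` by `π̂` costs at most
`max Z · ‖π̂ - w‖₁`, and `0 ≤ Z ≤ ‖α̃‖_var + ‖β̃‖_var + ‖C‖_∞` because
`0 ≤ ‖Ũᵀ(x_i - y_j)‖² ≤ ‖x_i - y_j‖²` by Bessel's inequality for the orthonormal columns of `Ũ`.
-/

open scoped BigOperators
open Matrix

noncomputable section

namespace PRWPaper

/-- Squared Euclidean norm of a vector in `ℝ^d`. -/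
def sqnorm {d : ℕ} (v : Fin d → ℝ) : ℝ := ∑ l, (v l) ^ 2

/-- `‖Uᵀ w‖²  = ⟨w wᵀ, U Uᵀ⟩` for `U ∈ ℝ^{d×k}`, `w ∈ ℝ^d`. -/
def projSq {d k : ℕ} (U : Matrix (Fin d) (Fin k) ℝ) (w : Fin d → ℝ) : ℝ :=
  ∑ m, (∑ l, U l m * w l) ^ 2

/-- `C_ij = ‖x_i - y_j‖²`. -/
def costC {n d : ℕ} (x y : Fin n → Fin d → ℝ) (i j : Fin n) : ℝ :=
  sqnorm (fun l => x i l - y j l)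

/-- `[C(U)]_ij = ‖Uᵀ (x_i - y_j)‖² = ⟨M_ij, U Uᵀ⟩`. -/
def costCU {n d k : ℕ} (x y : Fin n → Fin d → ℝ) (U : Matrix (Fin d) (Fin k) ℝ)
    (i j : Fin n) : ℝ :=
  projSq U (fun l => x i l - y j l)

/-- `‖C‖_∞ = max_{i,j} |C_ij|`. -/
def CInf {n d : ℕ} (x y : Fin n → Fin d → ℝ) : ℝ :=
  ⨆ p : Fin n × Fin n, |costC x y p.1 p.2|

/-- `φ_ij(α, β, U) = α_i + β_j + ⟨M_ij, U Uᵀ⟩`. -/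
def phi {n d k : ℕ} (x y : Fin n → Fin d → ℝ) (α β : Fin n → ℝ)
    (U : Matrix (Fin d) (Fin k) ℝ) (i j : Fin n) : ℝ :=
  α i + β j + costCU x y U i j

/-- `min_{i,j} φ_ij(α, β, U)`. -/
def phiMin {n d k : ℕ} (x y : Fin n → Fin d → ℝ) (α β : Fin n → ℝ)
    (U : Matrix (Fin d) (Fin k) ℝ) : ℝ :=
  ⨅ p : Fin n × Fin n, phi x y α β U p.1 p.2

/-- Membership in the (relatively open) simplex `Δ^n`. -/
def inSimplex {n : ℕ} (r : Fin n → ℝ) : Prop :=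
  (∑ i, r i) = 1 ∧ ∀ i, 0 < r i

/-- Membership in the transportation polytope `Π(r, c)`. -/
def inPlans {n : ℕ} (r c : Fin n → ℝ) (π : Matrix (Fin n) (Fin n) ℝ) : Prop :=
  (∀ i, ∑ j, π i j = r i) ∧ (∀ j, ∑ i, π i j = c j) ∧ ∀ i j, 0 ≤ π i j

/-- `ℓ₁` norm of a matrix. -/
def l1norm {n : ℕ} (A : Matrix (Fin n) (Fin n) ℝ) : ℝ := ∑ i, ∑ j, |A i j|

/-- `ζ_η(x, κ)_ij = κ_ij exp(-φ_ij(x)/η)`. -/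
def zeta {n d k : ℕ} (η : ℝ) (κ : Matrix (Fin n) (Fin n) ℝ) (x y : Fin n → Fin d → ℝ)
    (α β : Fin n → ℝ) (U : Matrix (Fin d) (Fin k) ℝ) : Matrix (Fin n) (Fin n) ℝ :=
  fun i j => κ i j * Real.exp (-(phi x y α β U i j) / η)

/-- `L_η((α,β,U), κ) = rᵀα + cᵀβ + η log ‖ζ_η((α,β,U),κ)‖₁`. -/
def Lfun {n d k : ℕ} (η : ℝ) (κ : Matrix (Fin n) (Fin n) ℝ) (r c : Fin n → ℝ)
    (x y : Fin n → Fin d → ℝ) (α β : Fin n → ℝ) (U : Matrix (Fin d) (Fin k) ℝ) : ℝ :=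
  (∑ i, r i * α i) + (∑ j, c j * β j) + η * Real.log (l1norm (zeta η κ x y α β U))

/-- `π_η(x, κ) = ζ_η(x,κ)/‖ζ_η(x,κ)‖₁`. -/
def piEta {n d k : ℕ} (η : ℝ) (κ : Matrix (Fin n) (Fin n) ℝ) (x y : Fin n → Fin d → ℝ)
    (α β : Fin n → ℝ) (U : Matrix (Fin d) (Fin k) ℝ) : Matrix (Fin n) (Fin n) ℝ :=
  fun i j => zeta η κ x y α β U i j / l1norm (zeta η κ x y α β U)

/-- Entropy `H(π) = -Σ_ij π_ij log π_ij` (with the convention `0 log 0 = 0`,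
which holds since `Real.log 0 = 0`). -/
def entropy {n : ℕ} (π : Matrix (Fin n) (Fin n) ℝ) : ℝ :=
  -∑ i, ∑ j, π i j * Real.log (π i j)

/-- `h(π, U) = ⟨C(U) - η log κ, π⟩ - η H(π)`. -/
def hObj {n d k : ℕ} (η : ℝ) (κ : Matrix (Fin n) (Fin n) ℝ) (x y : Fin n → Fin d → ℝ)
    (U : Matrix (Fin d) (Fin k) ℝ) (π : Matrix (Fin n) (Fin n) ℝ) : ℝ :=
  (∑ i, ∑ j, (costCU x y U i j - η * Real.log (κ i j)) * π i j) - η * entropy π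

/-- `‖π 1 - r‖₁`, the row-sum feasibility residual. -/
def rowRes {n : ℕ} (r : Fin n → ℝ) (π : Matrix (Fin n) (Fin n) ℝ) : ℝ :=
  ∑ i, |(∑ j, π i j) - r i|

/-- `‖πᵀ 1 - c‖₁`, the column-sum feasibility residual. -/
def colRes {n : ℕ} (c : Fin n → ℝ) (π : Matrix (Fin n) (Fin n) ℝ) : ℝ :=
  ∑ j, |(∑ i, π i j) - c j|

/-- Variation seminorm `‖v‖_var = max_i v_i - min_i v_i` of a vector. -/
def varVec {n : ℕ} (v : Fin n → ℝ) : ℝ := (⨆ i, v i) - (⨅ i, v i)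

/-- `‖log κ‖_var = max_{ij} log κ_ij - min_{ij} log κ_ij`. -/
def varLog {n : ℕ} (κ : Matrix (Fin n) (Fin n) ℝ) : ℝ :=
  (⨆ p : Fin n × Fin n, Real.log (κ p.1 p.2)) - (⨅ p : Fin n × Fin n, Real.log (κ p.1 p.2))

/-- `‖log κ‖_∞ = max_{ij} |log κ_ij|`. -/
def logInf {n : ℕ} (κ : Matrix (Fin n) (Fin n) ℝ) : ℝ :=
  ⨆ p : Fin n × Fin n, |Real.log (κ p.1 p.2)|

/-- Frobenius norm of a matrix. -/
def frobNorm {d k : ℕ} (A : Matrix (Fin d) (Fin k) ℝ) : ℝ :=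
  Real.sqrt (∑ l, ∑ m, (A l m) ^ 2)

/-- `V_π = Σ_ij π_ij M_ij` with `M_ij = (x_i - y_j)(x_i - y_j)ᵀ`. -/
def Vmat {n d : ℕ} (x y : Fin n → Fin d → ℝ) (π : Matrix (Fin n) (Fin n) ℝ) :
    Matrix (Fin d) (Fin d) ℝ :=
  fun l l' => ∑ i, ∑ j, π i j * ((x i l - y j l) * (x i l' - y j l'))

/-- Projection onto the tangent space of the Stiefel manifold at `U`:
`Proj_{T_U S}(A) = A - U (UᵀA + AᵀU)/2`. -/
def projTan {d k : ℕ} (U A : Matrix (Fin d) (Fin k) ℝ) : Matrix (Fin d) (Fin k) ℝ :=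
  A - (1 / 2 : ℝ) • (U * (Uᵀ * A + Aᵀ * U))

/-- Transport plan `(u_i A_ij v_j)_{ij}` normalized to total mass one. -/
def sinkMat {n : ℕ} (A : Matrix (Fin n) (Fin n) ℝ) (u v : Fin n → ℝ) :
    Matrix (Fin n) (Fin n) ℝ :=
  fun i j => u i * A i j * v j / (∑ i', ∑ j', u i' * A i' j' * v j')

open Real Finset

theorem nonempty_of_sum_eq_one {ι : Type*} [Fintype ι] {w : ι → ℝ} (hw : ∑ i, w i = 1) :
    Nonempty ι :=
  univ_nonempty_iff.1 (nonempty_of_sum_ne_zero (hw ▸ one_ne_zero))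

theorem neg_sum_mul_log_le_log_card {ι : Type*} [Fintype ι] {w : ι → ℝ} (hw : ∀ i, 0 < w i)
    (hsum : ∑ i, w i = 1) : -∑ i, w i * log (w i) ≤ log (Fintype.card ι) := by
  have jensen := strictConcaveOn_log_Ioi.concaveOn.le_map_sum (t := univ) (w := w)
    (p := fun i => (w i)⁻¹) (fun i _ => (hw i).le) hsum (fun i _ => inv_pos.2 (hw i))
  simpa [smul_eq_mul, mul_inv_cancel₀ (hw _).ne', log_inv] using jensen

theorem sum_gibbs_mul_sub_iInf_le {ι : Type*} [Fintype ι] {η : ℝ} (hη : 0 < η)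
    {κ φ : ι → ℝ} (hκ : ∀ i, 0 < κ i) (hsum : ∑ i, κ i * exp (-φ i / η) = 1) :
    ∑ i, κ i * exp (-φ i / η) * (φ i - ⨅ j, φ j)
      ≤ (log (Fintype.card ι) + ((⨆ i, log (κ i)) - ⨅ i, log (κ i))) * η := by
  set w : ι → ℝ := fun i => κ i * exp (-φ i / η) with hw
  have : Nonempty ι := nonempty_of_sum_eq_one hsum
  have hw_pos : ∀ i, 0 < w i := fun i => mul_pos (hκ i) (exp_pos _)
  have hw_le_one : ∀ i, w i ≤ 1 := fun i =>
    hsum ▸ single_le_sum (fun j _ => (hw_pos j).le) (mem_univ i)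
  have hφ : ∀ i, φ i = η * log (κ i) - η * log (w i) := fun i => by
    rw [hw, log_mul (hκ i).ne' (exp_pos _).ne', log_exp]
    field_simp
    ring
  have hmin : η * ⨅ i, log (κ i) ≤ ⨅ j, φ j := le_ciInf fun i => by
    have hκ_min := ciInf_le (Set.finite_range fun i => log (κ i)).bddBelow i
    have hw_log := log_nonpos (hw_pos i).le (hw_le_one i)
    rw [hφ i]
    nlinarith
  have hlogκ : ∑ i, w i * log (κ i) ≤ ⨆ i, log (κ i) :=
    calc ∑ i, w i * log (κ i) ≤ ∑ i, w i * ⨆ i, log (κ i) :=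
          sum_le_sum fun i _ => mul_le_mul_of_nonneg_left
            (le_ciSup (f := fun i => log (κ i)) (Set.finite_range _).bddAbove i) (hw_pos i).le
      _ = ⨆ i, log (κ i) := by rw [← sum_mul, hsum, one_mul]
  have hentropy := neg_sum_mul_log_le_log_card hw_pos hsum
  have hmean : ∑ i, w i * (φ i - ⨅ j, φ j)
      = η * ∑ i, w i * log (κ i) + η * -∑ i, w i * log (w i) - ⨅ j, φ j :=
    calc ∑ i, w i * (φ i - ⨅ j, φ j)
        = ∑ i, (η * (w i * log (κ i)) - η * (w i * log (w i)) - w i * ⨅ j, φ j) :=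
          sum_congr rfl fun i _ => by rw [hφ i]; ring
      _ = _ := by simp only [sum_sub_distrib, ← mul_sum, ← sum_mul, hsum]; ring
  rw [hmean]
  nlinarith

theorem sum_mul_le_sum_mul_add_mul {ι : Type*} [Fintype ι] [Nonempty ι] {p q z : ι → ℝ}
    {B ε : ℝ} (hz : ∀ i, 0 ≤ z i ∧ z i ≤ B) (hpq : ∑ i, |p i - q i| ≤ ε) :
    ∑ i, p i * z i ≤ ∑ i, q i * z i + B * ε := by
  have hB : 0 ≤ B := (hz (Classical.arbitrary ι)).1.trans (hz _).2
  have hdiff : ∑ i, (p i - q i) * z i ≤ (∑ i, |p i - q i|) * B := by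
    rw [sum_mul]
    exact sum_le_sum fun i _ => (mul_le_mul_of_nonneg_right (le_abs_self _) (hz i).1).trans
      (mul_le_mul_of_nonneg_left (hz i).2 (abs_nonneg _))
  calc ∑ i, p i * z i = ∑ i, q i * z i + ∑ i, (p i - q i) * z i := by
        rw [← sum_add_distrib]; exact sum_congr rfl fun i _ => by ring
    _ ≤ ∑ i, q i * z i + B * ε := by nlinarith

theorem projSq_le_sqnorm {d k : ℕ} {U : Matrix (Fin d) (Fin k) ℝ} (hU : Uᵀ * U = 1)
    (w : Fin d → ℝ) : projSq U w ≤ sqnorm w := by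
  have hcols : Orthonormal ℝ fun m => WithLp.toLp 2 fun l => U l m := by
    rw [orthonormal_iff_ite]
    intro m m'
    simpa [PiLp.inner_apply, Matrix.mul_apply, Matrix.one_apply, mul_comm]
      using congrFun (congrFun hU m) m'
  simpa [projSq, sqnorm, PiLp.inner_apply, EuclideanSpace.norm_sq_eq, mul_comm]
    using hcols.sum_inner_products_le (s := univ) (WithLp.toLp 2 w)

section Potential

variable {n d k : ℕ} {x y : Fin n → Fin d → ℝ} {α β : Fin n → ℝ} {U : Matrix (Fin d) (Fin k) ℝ}

theorem costCU_nonneg (i j : Fin n) : 0 ≤ costCU x y U i j := by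
  unfold costCU projSq
  positivity

theorem costCU_le_CInf (hU : Uᵀ * U = 1) (i j : Fin n) : costCU x y U i j ≤ CInf x y :=
  (projSq_le_sqnorm hU _).trans <| (le_abs_self _).trans <|
    le_ciSup (f := fun p : Fin n × Fin n => |costC x y p.1 p.2|) (Set.finite_range _).bddAbove (i, j)

theorem phiMin_le_phi (i j : Fin n) : phiMin x y α β U ≤ phi x y α β U i j :=
  ciInf_le (f := fun p : Fin n × Fin n => phi x y α β U p.1 p.2) (Set.finite_range _).bddBelow
    (i, j)

theorem iInf_add_iInf_le_phiMin [Nonempty (Fin n)] :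
    (⨅ i, α i) + (⨅ j, β j) ≤ phiMin x y α β U :=
  le_ciInf fun p => le_add_of_le_of_nonneg
    (add_le_add (ciInf_le (Set.finite_range α).bddBelow p.1)
      (ciInf_le (Set.finite_range β).bddBelow p.2)) (costCU_nonneg p.1 p.2)

theorem phi_sub_phiMin_le [Nonempty (Fin n)] (hU : Uᵀ * U = 1) (i j : Fin n) :
    phi x y α β U i j - phiMin x y α β U ≤ varVec α + varVec β + CInf x y := by
  have hα := le_ciSup (Set.finite_range α).bddAbove i
  have hβ := le_ciSup (Set.finite_range β).bddAbove j
  have hcost := costCU_le_CInf (x := x) (y := y) hU i j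
  have hmin := iInf_add_iInf_le_phiMin (x := x) (y := y) (α := α) (β := β) (U := U)
  unfold phi varVec
  linarith

end Potential

theorem statement15_general (n d k : ℕ) (η : ℝ) (hη : 0 < η)
    (κ : Matrix (Fin n) (Fin n) ℝ) (hκ : ∀ i j, 0 < κ i j)
    (r c : Fin n → ℝ)
    (x y : Fin n → Fin d → ℝ) (αt βt : Fin n → ℝ) (Ut : Matrix (Fin d) (Fin k) ℝ)
    (hU : Utᵀ * Ut = 1)
    (hζ : l1norm (zeta η κ x y αt βt Ut) = 1) :
    ∀ ε2 : ℝ, 0 ≤ ε2 → ∀ πh : Matrix (Fin n) (Fin n) ℝ, inPlans r c πh →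
      l1norm (πh - piEta η κ x y αt βt Ut) ≤ ε2 →
      (∑ i, ∑ j, πh i j * (phi x y αt βt Ut i j - phiMin x y αt βt Ut))
        ≤ (2 * Real.log n + varLog κ) * η
          + (varVec αt + varVec βt + CInf x y) * ε2 := by
  intro ε2 _ πh _ hl1
  set w := zeta η κ x y αt βt Ut
  have hw_pos : ∀ i j, 0 < w i j := fun i j => mul_pos (hκ i j) (exp_pos _)
  have hpiEta : piEta η κ x y αt βt Ut = w := by
    ext i j
    simp [piEta, hζ, w]
  have hsum : ∑ p : Fin n × Fin n, w p.1 p.2 = 1 := by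
    rw [← hζ, l1norm, ← Fintype.sum_prod_type']
    exact sum_congr rfl fun p _ => (abs_of_pos (hw_pos _ _)).symm
  rw [hpiEta, l1norm, ← Fintype.sum_prod_type'] at hl1
  have : Nonempty (Fin n) := ⟨(nonempty_of_sum_eq_one hsum).some.1⟩
  have hgibbs := sum_gibbs_mul_sub_iInf_le hη (κ := fun p : Fin n × Fin n => κ p.1 p.2)
    (φ := fun p => phi x y αt βt Ut p.1 p.2) (fun p => hκ _ _) hsum
  have hrounding := sum_mul_le_sum_mul_add_mul (p := fun p : Fin n × Fin n => πh p.1 p.2)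
    (q := fun p => w p.1 p.2) (z := fun p => phi x y αt βt Ut p.1 p.2 - phiMin x y αt βt Ut)
    (fun p => ⟨sub_nonneg.2 (phiMin_le_phi _ _), phi_sub_phiMin_le hU _ _⟩) hl1
  have hcard : log (Fintype.card (Fin n × Fin n)) = 2 * log n := by
    simp [← sq, log_pow]
  rw [hcard] at hgibbs
  rw [← Fintype.sum_prod_type']
  exact hrounding.trans (add_le_add_left hgibbs _)

/-- inequality (4.18b) of Theorem 4.8: the complementarity bound
after rounding. -/
theorem statement15 (n d k : ℕ) (hn : 1 ≤ n) (η : ℝ) (hη : 0 < η)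
    (κ : Matrix (Fin n) (Fin n) ℝ) (hκ : ∀ i j, 0 < κ i j)
    (r c : Fin n → ℝ) (hr : inSimplex r) (hc : inSimplex c)
    (x y : Fin n → Fin d → ℝ) (αt βt : Fin n → ℝ) (Ut : Matrix (Fin d) (Fin k) ℝ)
    (hU : Utᵀ * Ut = 1)
    (hζ : l1norm (zeta η κ x y αt βt Ut) = 1) :
    ∀ ε2 : ℝ, 0 ≤ ε2 → ∀ πh : Matrix (Fin n) (Fin n) ℝ, inPlans r c πh →
      l1norm (πh - piEta η κ x y αt βt Ut) ≤ ε2 →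
      (∑ i, ∑ j, πh i j * (phi x y αt βt Ut i j - phiMin x y αt βt Ut))
        ≤ (2 * Real.log n + varLog κ) * η
          + (varVec αt + varVec βt + CInf x y) * ε2 :=
  statement15_general n d k η hη κ hκ r c x y αt βt Ut hU hζ

end PRWPaper
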